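/- arXiv:2204.10013 — 6 statements merged into one kernel-verified Lean document; each statement's English description precedes it below -/
import Mathlib

section
/- Let T be a C*-embedded subset of a Tychonoff space X. If T is S-embedded in X, then for every g ∈ C(X) that is bounded away from zero on every hard subset of T, the set T and the zero set Z(g) are completely separated in X. -/
open Set ContinuousMap

/-- Points of the Stone–Čech compactification belonging to the Hewitt
realcompactification: those `p` to which every real-valued continuous function
on `Y` extends continuously (on the subspace `Y ∪ {p}` of `βY`). -/
def hewittSet (Y : Type*) [TopologicalSpace Y] : Set (StoneCech Y) :=
  {p | ∀ f : C(Y, ℝ), ∃ g : C((Set.range (stoneCechUnit : Y → StoneCech Y) ∪ {p} :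
      Set (StoneCech Y)), ℝ), ∀ x : Y, g ⟨stoneCechUnit x, Or.inl ⟨x, rfl⟩⟩ = f x}

/-- The subspace `Y ∪ K` of `βY`, where `K = cl_{βY}(υY \ Y)`. -/
def hardCore (Y : Type*) [TopologicalSpace Y] : Set (StoneCech Y) :=
  Set.range (stoneCechUnit : Y → StoneCech Y) ∪
    closure (hewittSet Y \ Set.range (stoneCechUnit : Y → StoneCech Y))

/-- `H ⊆ Y` is hard in `Y` if it is closed in the subspace `Y ∪ cl_{βY}(υY \ Y)`. -/
def IsHard {Y : Type*} [TopologicalSpace Y] (H : Set Y) : Prop :=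
  IsClosed {p : hardCore Y | (p : StoneCech Y) ∈ stoneCechUnit '' H}

/-- `f` is bounded on every hard subset of `Y`, i.e. `f ∈ S(Y)`. -/
def HardBounded {Y : Type*} [TopologicalSpace Y] (f : C(Y, ℝ)) : Prop :=
  ∀ H : Set Y, IsHard H → ∃ M, ∀ x ∈ H, |f x| ≤ M

/-- A space is realcompact iff it coincides with its Hewitt realcompactification. -/
def IsRealcompact (Y : Type*) [TopologicalSpace Y] : Prop :=
  hewittSet Y ⊆ Set.range (stoneCechUnit : Y → StoneCech Y)

/-- `T` is `C*`-embedded in `X`. -/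
def CStarEmbedded {X : Type*} [TopologicalSpace X] (T : Set X) : Prop :=
  ∀ f : C(T, ℝ), (∃ M, ∀ x, |f x| ≤ M) → ∃ g : C(X, ℝ), ∀ x : T, g x = f x

/-- `T` is `S`-embedded in `X`: every hard-bounded continuous function on `T`
extends continuously to `X`. -/
def SEmbedded {X : Type*} [TopologicalSpace X] (T : Set X) : Prop :=
  ∀ f : C(T, ℝ), (∀ H : Set T, IsHard H → ∃ M, ∀ x ∈ H, |f x| ≤ M) →
    ∃ g : C(X, ℝ), ∀ x : T, g x = f x

/-- `A` and `B` are completely separated in `X`. -/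
def CompletelySeparatedIn (X : Type*) [TopologicalSpace X] (A B : Set X) : Prop :=
  ∃ h : C(X, ℝ), (∀ x ∈ A, h x = 1) ∧ (∀ x ∈ B, h x = 0) ∧ ∀ x, h x ∈ Set.Icc (0:ℝ) 1

/-- `g` is bounded away from zero on every hard subset of the subspace `T`. -/
def BddAwayOnHards {X : Type*} [TopologicalSpace X] (g : C(X, ℝ)) (T : Set X) : Prop :=
  ∀ H : Set T, IsHard H → ∃ m > 0, ∀ x ∈ H, m ≤ |g x.1|

/-! Singletons are hard since `βT` is Hausdorff, so `g` has no zero on `T`, and `1/g` is a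
continuous function on `T` that is bounded on every hard set; hence `S`-embeddedness
extends it to some `h ∈ C(X)`. Then `g h = 1` on `T` and `g h = 0` on `Z(g)`, and truncating
`g h` to `[0, 1]` separates the two sets. -/

theorem isHard_singleton {Y : Type*} [TopologicalSpace Y] (y : Y) : IsHard ({y} : Set Y) := by
  have hpre : {p : hardCore Y | (p : StoneCech Y) ∈ stoneCechUnit '' ({y} : Set Y)}
      = (Subtype.val : hardCore Y → StoneCech Y) ⁻¹' {stoneCechUnit y} := by
    ext p
    simp only [image_singleton, mem_ofPred_eq, mem_preimage]
  rw [IsHard, hpre]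
  exact isClosed_singleton.preimage continuous_subtype_val

theorem CompletelySeparatedIn.of_mul_eq_one {X : Type*} [TopologicalSpace X] {A : Set X}
    (g h : C(X, ℝ)) (hgh : ∀ x ∈ A, g x * h x = 1) :
    CompletelySeparatedIn X A {x | g x = 0} := by
  refine ⟨⟨fun x => max 0 (min 1 (g x * h x)),
    continuous_const.max (continuous_const.min (g.continuous.mul h.continuous))⟩,
    fun x hx => ?_, fun x hx => ?_, fun x => ⟨le_max_left _ _, ?_⟩⟩
  · simp [hgh x hx]
  · simp [show g x = 0 from hx]
  · exact max_le zero_le_one (min_le_left _ _)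

namespace BddAwayOnHards

variable {X : Type*} [TopologicalSpace X] {g : C(X, ℝ)} {T : Set X}

theorem ne_zero (hg : BddAwayOnHards g T) (t : T) : g t ≠ 0 := by
  obtain ⟨m, hm, hb⟩ := hg {t} (isHard_singleton t)
  intro h0
  have := hb t rfl
  rw [h0, abs_zero] at this
  linarith

noncomputable def invOn (hg : BddAwayOnHards g T) : C(T, ℝ) :=
  ⟨fun t => (g t)⁻¹, (g.continuous.comp continuous_subtype_val).inv₀ hg.ne_zero⟩

@[simp]
theorem invOn_apply (hg : BddAwayOnHards g T) (t : T) : hg.invOn t = (g t)⁻¹ := rfl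

theorem hardBounded_invOn (hg : BddAwayOnHards g T) : HardBounded hg.invOn := by
  intro H hH
  obtain ⟨m, hm, hb⟩ := hg H hH
  refine ⟨m⁻¹, fun x hx => ?_⟩
  rw [invOn_apply, abs_inv]
  exact inv_anti₀ hm (hb x hx)

theorem exists_mul_eq_one (hS : SEmbedded T) (hg : BddAwayOnHards g T) :
    ∃ h : C(X, ℝ), ∀ x ∈ T, g x * h x = 1 := by
  obtain ⟨h, hh⟩ := hS hg.invOn hg.hardBounded_invOn
  refine ⟨h, fun x hx => ?_⟩
  rw [hh ⟨x, hx⟩, invOn_apply]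
  exact mul_inv_cancel₀ (hg.ne_zero ⟨x, hx⟩)

end BddAwayOnHards

theorem completelySeparated_of_sEmbedded_general (X : Type*) [TopologicalSpace X]
    (T : Set X) (hS : SEmbedded T)
    (g : C(X, ℝ)) (hg : BddAwayOnHards g T) :
    CompletelySeparatedIn X T {x | g x = 0} := by
  obtain ⟨h, hgh⟩ := hg.exists_mul_eq_one hS
  exact CompletelySeparatedIn.of_mul_eq_one g h hgh

/-- if a `C*`-embedded `T` is `S`-embedded, then `T` is completely
separated from `Z(g)` for every `g` bounded away from zero on every hard subset of `T`. -/
theorem completelySeparated_of_sEmbedded (X : Type*) [TopologicalSpace X] [T35Space X]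
    (T : Set X) (hC : CStarEmbedded T) (hS : SEmbedded T)
    (g : C(X, ℝ)) (hg : BddAwayOnHards g T) :
    CompletelySeparatedIn X T {x | g x = 0} :=
  completelySeparated_of_sEmbedded_general X T hS g hg
end

section
/- Let T be a C*-embedded subset of a Tychonoff space X. If T is completely separated from every zero set Z(g) in X where g ∈ C(X) is bounded away from zero on every hard subset of T, then T is S-embedded in X. -/
open Set ContinuousMap

/-! Write `f = k / l` with `k = f / (1 + |f|)` and `l = 1 / (1 + |f|)`, both bounded, so both
extend to `K, L ∈ C(X)` by `C*`-embedding. Hard-boundedness of `f` makes `L` bounded away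
from zero on hard sets, so some `u : X → [0, 1]` is `1` on `T` and `0` on `Z(L)`. Then
`K u / (|L| + 1 - u)` has a nonvanishing denominator and restricts to `k / l = f` on `T`. -/

section

variable {Y : Type*} [TopologicalSpace Y]

noncomputable def invOneAddAbs (f : C(Y, ℝ)) : C(Y, ℝ) :=
  ⟨fun y => (1 + |f y|)⁻¹,
    (continuous_const.add f.continuous.abs).inv₀ fun y => (by positivity : (0 : ℝ) < 1 + |f y|).ne'⟩

theorem invOneAddAbs_apply (f : C(Y, ℝ)) (y : Y) : invOneAddAbs f y = (1 + |f y|)⁻¹ := rfl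

theorem abs_invOneAddAbs_le_one (f : C(Y, ℝ)) (y : Y) : |invOneAddAbs f y| ≤ 1 := by
  rw [invOneAddAbs_apply, abs_of_pos (by positivity)]
  exact inv_le_one_of_one_le₀ (le_add_of_nonneg_right (abs_nonneg _))

theorem abs_mul_invOneAddAbs_le_one (f : C(Y, ℝ)) (y : Y) : |(f * invOneAddAbs f) y| ≤ 1 := by
  have hpos : 0 < 1 + |f y| := by positivity
  rw [mul_apply, invOneAddAbs_apply, abs_mul, abs_of_pos (inv_pos.mpr hpos),
    ← div_eq_mul_inv, div_le_one hpos]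
  linarith

end

theorem bddAwayOnHards_of_extends_invOneAddAbs {X : Type*} [TopologicalSpace X] {T : Set X}
    {f : C(T, ℝ)} (hf : HardBounded f) {L : C(X, ℝ)} (hL : ∀ x : T, L x = invOneAddAbs f x) :
    BddAwayOnHards L T := by
  intro H hH
  obtain ⟨M, hM⟩ := hf H hH
  refine ⟨(1 + |M|)⁻¹, by positivity, fun x hx => ?_⟩
  have hpos : (0 : ℝ) < 1 + |f x| := by positivity
  rw [hL x, invOneAddAbs_apply, abs_of_pos (inv_pos.mpr hpos)]
  exact inv_anti₀ hpos (by linarith [hM x hx, le_abs_self M])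

theorem exists_extension_of_eq_div {X : Type*} [TopologicalSpace X] {T : Set X} (f : T → ℝ)
    (K L u : C(X, ℝ)) (hf : ∀ x : T, 0 < L x ∧ f x = K x / L x) (hu_one : ∀ x ∈ T, u x = 1)
    (hu_zero : ∀ x, L x = 0 → u x = 0) (hu_le : ∀ x, u x ≤ 1) :
    ∃ g : C(X, ℝ), ∀ x : T, g x = f x := by
  have hd : ∀ x, |L x| + (1 - u x) ≠ 0 := by
    intro x
    rcases eq_or_ne (L x) 0 with h | h
    · simp [h, hu_zero x h]
    · have := abs_pos.mpr h
      linarith [hu_le x]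
  refine ⟨⟨fun x => K x * u x / (|L x| + (1 - u x)),
    (K.continuous.mul u.continuous).div (L.continuous.abs.add (continuous_const.sub u.continuous))
      hd⟩, fun x => ?_⟩
  obtain ⟨hLx, hfx⟩ := hf x
  simp [hu_one x x.2, abs_of_pos hLx, hfx]

theorem sEmbedded_of_completelySeparated_general (X : Type*) [TopologicalSpace X]
    (T : Set X) (hC : CStarEmbedded T)
    (hsep : ∀ g : C(X, ℝ), BddAwayOnHards g T → CompletelySeparatedIn X T {x | g x = 0}) :
    SEmbedded T := by
  intro f hf
  obtain ⟨K, hK⟩ := hC (f * invOneAddAbs f) ⟨1, abs_mul_invOneAddAbs_le_one f⟩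
  obtain ⟨L, hL⟩ := hC (invOneAddAbs f) ⟨1, abs_invOneAddAbs_le_one f⟩
  obtain ⟨u, hu_one, hu_zero, hu_mem⟩ := hsep L (bddAwayOnHards_of_extends_invOneAddAbs hf hL)
  refine exists_extension_of_eq_div f K L u (fun x => ?_) hu_one hu_zero fun x => (hu_mem x).2
  have hpos : 0 < 1 + |f x| := by positivity
  rw [hK x, hL x, mul_apply, invOneAddAbs_apply]
  exact ⟨by positivity, by field_simp⟩

/-- a `C*`-embedded `T` completely separated from every `Z(g)` with `g`
bounded away from zero on every hard subset of `T` is `S`-embedded. -/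
theorem sEmbedded_of_completelySeparated (X : Type*) [TopologicalSpace X] [T35Space X]
    (T : Set X) (hC : CStarEmbedded T)
    (hsep : ∀ g : C(X, ℝ), BddAwayOnHards g T → CompletelySeparatedIn X T {x | g x = 0}) :
    SEmbedded T :=
  sEmbedded_of_completelySeparated_general X T hC hsep
end

section
/- Let f be a continuous real-valued function on a Tychonoff space X that is bounded on every hard subset of X. Then f is bounded on every realcompact cozero set in X. -/
open Set ContinuousMap

/-! If `f` were unbounded on the realcompact cozero set `P = coz g`, choose `d k ∈ P` with
`|f (d k)|` increasing by at least `1` at each step. Then `D = {d k}` is closed in `X`, and a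
Tietze interpolation `t` of `1 / |g (d k)|` at the points `|f (d k)|` yields
`u = min 1 (|g| * t ∘ |f|)`, which completely separates `D` from `X \ P`.

A point `q ∈ υX` at which `βu > 1/2` lies in the closure of `P`, so it is the image of some
`q' ∈ βP`. Every `h ∈ C(P)`, multiplied by a cutoff in `u` and extended by zero, becomes a
function on `X` with a limit at `q`; near `q'` it agrees with `h`, so `q' ∈ υP = P` and `q ∈ X`.
Hence `cl_{βX} D` misses `cl_{βX} (υX \ X)`, so `D` is hard and `f` is bounded on it. -/

open Filter Topology unitInterval

lemma add_le_add_of_add_one_le_succ {s : ℕ → ℝ} (hs : ∀ k, s k + 1 ≤ s (k + 1)) {j k : ℕ}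
    (hjk : j ≤ k) : s j + k ≤ s k + j := by
  have hmono : Monotone fun k : ℕ => s k - k :=
    monotone_nat_of_le_succ fun k => by push_cast; linarith [hs k]
  linarith [hmono hjk]

lemma pairwise_one_le_dist_of_add_one_le_succ {s : ℕ → ℝ} (hs : ∀ k, s k + 1 ≤ s (k + 1)) :
    Pairwise fun j k => 1 ≤ dist (s j) (s k) := by
  intro j k hne
  wlog hjk : j < k generalizing j k
  · exact dist_comm (s j) (s k) ▸ this hne.symm (hne.lt_or_gt.resolve_left hjk)
  have hgap := add_le_add_of_add_one_le_succ hs hjk.le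
  have hjk' : (j : ℝ) + 1 ≤ k := by exact_mod_cast hjk
  rw [Real.dist_eq, abs_sub_comm]
  exact le_trans (by linarith) (le_abs_self _)

lemma tendsto_atTop_of_add_one_le_succ {s : ℕ → ℝ} (hs : ∀ k, s k + 1 ≤ s (k + 1)) :
    Tendsto s atTop atTop := by
  refine tendsto_atTop_mono (fun k => ?_)
    (tendsto_atTop_add_const_left _ (s 0) tendsto_natCast_atTop_atTop)
  have := add_le_add_of_add_one_le_succ hs k.zero_le
  push_cast at this
  linarith

lemma exists_seq_add_one_le_succ_of_not_bddAbove {X : Type*} {φ : X → ℝ} {P : Set X}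
    (h : ¬ BddAbove (φ '' P)) : ∃ d : ℕ → X, (∀ k, d k ∈ P) ∧ ∀ k, φ (d k) + 1 ≤ φ (d (k + 1)) := by
  choose c hcP hc using fun M => by simpa using not_bddAbove_iff.1 h M
  let d : ℕ → X := fun k => Nat.rec (c 0) (fun _ x => c (φ x + 1)) k
  refine ⟨d, fun k => ?_, fun k => (hc _).le⟩
  cases k <;> exact hcP _

lemma exists_continuousMap_apply_eq_of_add_one_le_succ {s : ℕ → ℝ}
    (hs : ∀ k, s k + 1 ≤ s (k + 1)) (v : ℕ → ℝ) : ∃ t : C(ℝ, ℝ), ∀ k, t (s k) = v k := by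
  obtain ⟨t, ht⟩ := ContinuousMap.exists_extension' (Metric.isClosedEmbedding_of_pairwise_le_dist
    one_pos (pairwise_one_le_dist_of_add_one_le_succ hs)) ⟨v, continuous_of_discreteTopology⟩
  exact ⟨t, congr_fun ht⟩

section

variable {X : Type*} [TopologicalSpace X]

lemma isClosed_range_of_pairwise_le_dist_comp [T1Space X] {γ ι : Type*} [PseudoMetricSpace γ]
    {φ : X → γ} (hφ : Continuous φ) {d : ι → X} {ε : ℝ} (hε : 0 < ε)
    (h : Pairwise fun j k => ε ≤ dist (φ (d j)) (φ (d k))) : IsClosed (range d) := by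
  rw [← iUnion_singleton_eq_range]
  refine LocallyFinite.isClosed_iUnion (fun x => ?_) fun _ => isClosed_singleton
  refine ⟨φ ⁻¹' Metric.ball (φ x) (ε / 2),
    hφ.continuousAt.preimage_mem_nhds (Metric.ball_mem_nhds _ (half_pos hε)),
    Set.Subsingleton.finite fun j hj k hk => by_contra fun hne => ?_⟩
  obtain ⟨_, rfl, hj⟩ := hj
  obtain ⟨_, rfl, hk⟩ := hk
  have := dist_triangle_right (φ (d j)) (φ (d k)) (φ x)
  linarith [h hne, Metric.mem_ball.1 hj, Metric.mem_ball.1 hk]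

lemma completelySeparatedIn_range_compl_cozero {φ : X → ℝ} (hφ : Continuous φ) (g : C(X, ℝ))
    {d : ℕ → X} (hd : ∀ k, g (d k) ≠ 0) (hs : ∀ k, φ (d k) + 1 ≤ φ (d (k + 1))) :
    CompletelySeparatedIn X (range d) {x | g x ≠ 0}ᶜ := by
  obtain ⟨t, ht⟩ := exists_continuousMap_apply_eq_of_add_one_le_succ hs fun k => |g (d k)|⁻¹
  refine ⟨⟨fun x => max 0 (min 1 (|g x| * t (φ x))), by fun_prop⟩, ?_, ?_,
    fun x => ⟨le_max_left _ _, max_le zero_le_one (min_le_left _ _)⟩⟩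
  · rintro _ ⟨k, rfl⟩
    simp [ht, hd k]
  · intro x hx
    simp_all

lemma mem_hewittSet_iff [CompletelyRegularSpace X] {p : StoneCech X} :
    p ∈ hewittSet X ↔ ∀ h : C(X, ℝ), ∃ r, Tendsto h (comap stoneCechUnit (𝓝 p)) (𝓝 r) := by
  let j : X → (range stoneCechUnit ∪ {p} : Set (StoneCech X)) :=
    fun x => ⟨stoneCechUnit x, Or.inl ⟨x, rfl⟩⟩
  have hcomap : ∀ b, comap j (𝓝 b) = comap stoneCechUnit (𝓝 (b : StoneCech X)) := fun b => by
    rw [nhds_subtype, comap_comap]; rfl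
  constructor
  · intro hp h
    obtain ⟨G, hG⟩ := hp h
    refine ⟨G ⟨p, Or.inr rfl⟩, ?_⟩
    rw [← hcomap ⟨p, Or.inr rfl⟩, show ⇑h = G ∘ j from funext fun x => (hG x).symm]
    exact (G.continuous.tendsto _).comp tendsto_comap
  · intro hlim h
    have hj : IsDenseInducing j :=
      { toIsInducing := IsInducing.subtypeVal.of_comp_iff.1 isInducing_stoneCechUnit
        dense := Subtype.dense_iff.2 fun z _ => by
          rw [← range_comp]; exact denseRange_stoneCechUnit z }
    refine ⟨⟨hj.extend h, hj.continuous_extend fun b => ?_⟩, hj.extend_eq h.continuous⟩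
    rw [hcomap]
    obtain ⟨x, hx⟩ | hb := b.2
    · rw [← hx, ← isInducing_stoneCechUnit.nhds_eq_comap]
      exact ⟨h x, h.continuous.tendsto x⟩
    · rw [show (b : StoneCech X) = p from hb]
      exact hlim h

lemma exists_continuousMap_eq_mul_of_tsupport_subset {W : Set X} (hW : IsOpen W) {ψ : C(X, ℝ)}
    (hψ : tsupport ψ ⊆ W) (h : C(W, ℝ)) : ∃ F : C(X, ℝ), ∀ x : W, F x = h x * ψ x := by
  classical
  let F : X → ℝ := fun x => if hx : x ∈ W then h ⟨x, hx⟩ * ψ x else 0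
  have hF : ∀ x : W, F x = h x * ψ x := fun x => dif_pos x.2
  refine ⟨⟨F, ContinuousOn.continuous_of_tsupport_subset ?_ hW ?_⟩, hF⟩
  · rw [continuousOn_iff_continuous_domRestrict,
      show W.domRestrict F = fun x => h x * ψ x from funext hF]
    fun_prop
  · refine (closure_mono fun x hx => ?_).trans hψ
    by_cases hxW : x ∈ W
    · exact right_ne_zero_of_mul (by simpa [F, hxW] using hx)
    · simp [F, hxW] at hx

noncomputable def stoneCechInclusion (P : Set X) : StoneCech P → StoneCech X :=
  stoneCechExtend (continuous_stoneCechUnit.comp continuous_subtype_val)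

lemma continuous_stoneCechInclusion (P : Set X) : Continuous (stoneCechInclusion P) :=
  continuous_stoneCechExtend _

@[simp]
lemma stoneCechInclusion_stoneCechUnit {P : Set X} (x : P) :
    stoneCechInclusion P (stoneCechUnit x) = stoneCechUnit (x : X) :=
  stoneCechExtend_stoneCechUnit _ x

lemma closure_image_stoneCechUnit_subset_range (P : Set X) :
    closure (stoneCechUnit '' P) ⊆ range (stoneCechInclusion P) :=
  closure_minimal (by rintro _ ⟨x, hx, rfl⟩; exact ⟨stoneCechUnit ⟨x, hx⟩, by simp⟩)
    (isCompact_range (continuous_stoneCechInclusion P)).isClosed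

lemma mem_hewittSet_of_stoneCechInclusion_mem_hewittSet [CompletelyRegularSpace X] {P : Set X}
    {ψ : C(X, ℝ)} (hψ : tsupport ψ ⊆ interior P) {O : Set (StoneCech X)} (hO : IsOpen O)
    (hψO : ∀ x, stoneCechUnit x ∈ O → ψ x = 1) {q : StoneCech P}
    (hqO : stoneCechInclusion P q ∈ O) (hq : stoneCechInclusion P q ∈ hewittSet X) :
    q ∈ hewittSet P := by
  rw [mem_hewittSet_iff] at hq ⊢
  intro h
  obtain ⟨F, hF⟩ := exists_continuousMap_eq_mul_of_tsupport_subset isOpen_interior hψ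
    (h.comp (ContinuousMap.inclusion interior_subset))
  obtain ⟨r, hr⟩ := hq F
  refine ⟨r, Tendsto.congr' ?_ ((hr.comp (tendsto_comap (f := Subtype.val))).mono_left ?_)⟩
  · filter_upwards [preimage_mem_comap
      ((hO.preimage (continuous_stoneCechInclusion P)).mem_nhds hqO)] with x hx
    have hx1 : ψ x = 1 := hψO x (by simpa using hx)
    have hxP : (x : X) ∈ interior P := hψ (subset_tsupport _ (by simp [hx1]))
    simpa [hx1, ContinuousMap.inclusion, Set.inclusion] using hF ⟨x, hxP⟩
  · rw [comap_comap, show stoneCechUnit ∘ Subtype.val = stoneCechInclusion P ∘ stoneCechUnit by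
      ext; simp, ← comap_comap]
    exact comap_mono ((continuous_stoneCechInclusion P).tendsto q).le_comap

lemma mem_range_stoneCechUnit_of_mem_hewittSet [CompletelyRegularSpace X] {P : Set X}
    (hP : IsRealcompact P) {u : X → I} (hu : Continuous u) (huP : ∀ x ∉ P, u x = 0)
    {q : StoneCech X} (hq : q ∈ hewittSet X) (hqu : 1 / 2 < ((stoneCechExtend hu q : I) : ℝ)) :
    q ∈ range stoneCechUnit := by
  let O : Set (StoneCech X) := {z | 1 / 2 < ((stoneCechExtend hu z : I) : ℝ)}
  have hO : IsOpen O :=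
    isOpen_lt continuous_const (continuous_subtype_val.comp (continuous_stoneCechExtend hu))
  have hOu : ∀ x, stoneCechUnit x ∈ O → 1 / 2 < (u x : ℝ) := fun x hx => by
    simpa [O, stoneCechExtend_stoneCechUnit] using hx
  let ψ : C(X, ℝ) := ⟨fun x => min 1 (max 0 (4 * u x - 1)), by fun_prop⟩
  have hψO : ∀ x, stoneCechUnit x ∈ O → ψ x = 1 := fun x hx => by
    have := hOu x hx
    simp only [ψ, ContinuousMap.coe_mk, min_eq_left_iff, le_max_iff]
    right; linarith
  have hposP : {x | 0 < (u x : ℝ)} ⊆ P := fun x hx => by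
    by_contra hxP
    simp [huP x hxP] at hx
  have hψ : tsupport ψ ⊆ interior P := by
    have hsupp : Function.support ψ ⊆ {x | 1 / 4 ≤ (u x : ℝ)} := fun x hx => by
      by_contra hlt : ¬1 / 4 ≤ (u x : ℝ)
      have : 4 * (u x : ℝ) - 1 ≤ 0 := by linarith [not_le.1 hlt]
      exact hx (by simp [ψ, this])
    refine (closure_minimal hsupp (isClosed_le continuous_const (by fun_prop))).trans
      fun x hx => interior_maximal hposP (isOpen_lt continuous_const (by fun_prop)) ?_
    change 0 < (u x : ℝ)
    linarith [show 1 / 4 ≤ (u x : ℝ) from hx]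
  obtain ⟨q', rfl⟩ : q ∈ range (stoneCechInclusion P) := by
    refine closure_image_stoneCechUnit_subset_range P (closure_mono ?_ (hO.inter_closure
      ⟨hqu, denseRange_stoneCechUnit q⟩))
    rintro _ ⟨hxO, x, rfl⟩
    exact ⟨x, hposP (show 0 < (u x : ℝ) by linarith [hOu x hxO]), rfl⟩
  obtain ⟨y, rfl⟩ := hP (mem_hewittSet_of_stoneCechInclusion_mem_hewittSet hψ hO hψO hqu hq)
  exact ⟨y, (stoneCechInclusion_stoneCechUnit y).symm⟩

lemma isHard_of_disjoint_closure [CompletelyRegularSpace X] {D : Set X} (hD : IsClosed D)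
    (h : Disjoint (closure (stoneCechUnit '' D)) (closure (hewittSet X \ range stoneCechUnit))) :
    IsHard D := by
  have hcl : {p : hardCore X | (p : StoneCech X) ∈ stoneCechUnit '' D} =
      Subtype.val ⁻¹' closure (stoneCechUnit '' D) := by
    ext ⟨z, hz⟩
    refine ⟨fun hzD => subset_closure hzD, fun hzD => ?_⟩
    obtain ⟨y, rfl⟩ | hz := hz
    · have hy : y ∈ closure D := by
        rw [isInducing_stoneCechUnit.closure_eq_preimage_closure_image]; exact hzD
      exact ⟨y, hD.closure_eq ▸ hy, rfl⟩
    · exact (h.ne_of_mem hzD hz rfl).elim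
  rw [IsHard, hcl]
  exact isClosed_closure.preimage continuous_subtype_val

lemma isHard_of_completelySeparatedIn [CompletelyRegularSpace X] {P D : Set X}
    (hP : IsRealcompact P) (hD : IsClosed D) (hsep : CompletelySeparatedIn X D Pᶜ) :
    IsHard D := by
  obtain ⟨u, hu1, hu0, huI⟩ := hsep
  let v : X → I := fun x => ⟨u x, huI x⟩
  have hv : Continuous v := u.continuous.subtype_mk _
  have hβv : Continuous fun z => ((stoneCechExtend hv z : I) : ℝ) :=
    continuous_subtype_val.comp (continuous_stoneCechExtend hv)
  let O : Set (StoneCech X) := {z | 1 / 2 < ((stoneCechExtend hv z : I) : ℝ)}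
  have hO : IsOpen O := isOpen_lt continuous_const hβv
  have hD1 : closure (stoneCechUnit '' D) ⊆ {z | ((stoneCechExtend hv z : I) : ℝ) = 1} :=
    closure_minimal (by rintro _ ⟨x, hx, rfl⟩; simp [v, stoneCechExtend_stoneCechUnit, hu1 x hx])
      (isClosed_eq hβv continuous_const)
  have hDO : closure (stoneCechUnit '' D) ⊆ O := fun z hz => by
    change 1 / 2 < ((stoneCechExtend hv z : I) : ℝ)
    rw [show ((stoneCechExtend hv z : I) : ℝ) = 1 from hD1 hz]
    norm_num
  refine isHard_of_disjoint_closure hD ((Disjoint.closure_right ?_ hO).mono_left hDO)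
  exact disjoint_left.2 fun z hzO hz => hz.2 <| mem_range_stoneCechUnit_of_mem_hewittSet hP hv
    (fun x hx => Subtype.ext (hu0 x hx)) hz.1 hzO

end

/-- a hard-bounded function is bounded on every realcompact cozero set. -/
theorem bounded_on_realcompact_cozero_of_hardBounded (X : Type*) [TopologicalSpace X]
    [T35Space X] (f : C(X, ℝ)) (hf : HardBounded f) :
    ∀ P : Set X, (∃ g : C(X, ℝ), P = {x | g x ≠ 0}) → IsRealcompact P →
      ∃ M, ∀ x ∈ P, |f x| ≤ M := by
  rintro P ⟨g, rfl⟩ hP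
  suffices BddAbove ((fun x => |f x|) '' {x | g x ≠ 0}) by simpa [bddAbove_def] using this
  by_contra hunb
  obtain ⟨d, hdP, hd⟩ := exists_seq_add_one_le_succ_of_not_bddAbove hunb
  have hD : IsClosed (range d) := isClosed_range_of_pairwise_le_dist_comp
    (φ := fun x => |f x|) (by fun_prop) one_pos (pairwise_one_le_dist_of_add_one_le_succ hd)
  obtain ⟨M, hM⟩ := hf _ (isHard_of_completelySeparatedIn hP hD
    (completelySeparatedIn_range_compl_cozero (φ := fun x => |f x|) (by fun_prop) g hdP hd))
  obtain ⟨k, hk⟩ := ((tendsto_atTop_of_add_one_le_succ hd).eventually_gt_atTop M).exists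
  exact (hM (d k) ⟨k, rfl⟩).not_gt hk
end

section
/- Let f be a continuous real-valued function on a Tychonoff space X that is bounded on every realcompact cozero set of X. Then f is bounded on every hard subset of X. -/
open Set ContinuousMap

/-! If `f` were unbounded on a hard set `H`, the extension `K` to `βX` of `(1 + f²)⁻¹` would
take a value `≤ 0` at some `p ∈ cl_{βX} H`; as `K > 0` on `X`, `p ∉ H`, and since `H` is closed in
`X ∪ cl_{βX}(υX \ X)`, also `p ∉ cl_{βX}(υX \ X)`. An Urysohn function `G` on `βX` vanishing on
`cl_{βX}(υX \ X)` with `G p = 1` gives the cozero set `P = {G ≠ 0} ∩ X`, which is realcompact: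
the canonical map `βP → βX` sends `υP` into `υX`, and the points of `υX` where `G ≠ 0` lie in `X`.
So `|f| ≤ M` on `P`, hence `K ≥ (1 + M²)⁻¹` on the neighbourhood `{G ≠ 0}` of `p`, a contradiction. -/

open Topology

lemma abs_le_one_add_sq (a : ℝ) : |a| ≤ 1 + a ^ 2 := by
  nlinarith [sq_abs a, sq_nonneg (|a| - 1)]

section StoneCech

variable {X : Type*} [TopologicalSpace X]

lemma exists_stoneCech_extension_of_abs_le (k : C(X, ℝ)) {c : ℝ} (hk : ∀ x, |k x| ≤ c) :
    ∃ K : C(StoneCech X, ℝ), ∀ x, K (stoneCechUnit x) = k x := by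
  have hk' : Continuous fun x => (⟨k x, abs_le.mp (hk x)⟩ : Icc (-c) c) :=
    k.continuous.subtype_mk _
  exact ⟨⟨fun p => ((stoneCechExtend hk' p : Icc (-c) c) : ℝ),
    continuous_subtype_val.comp (continuous_stoneCechExtend hk')⟩,
    fun x => by simp⟩

lemma exists_stoneCech_extension_inv_one_add_sq (f : C(X, ℝ)) :
    ∃ K : C(StoneCech X, ℝ), ∀ x, K (stoneCechUnit x) = (1 + f x ^ 2)⁻¹ := by
  have hpos : ∀ x, 0 < 1 + f x ^ 2 := fun x => by positivity
  refine exists_stoneCech_extension_of_abs_le ⟨fun x => (1 + f x ^ 2)⁻¹,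
    (continuous_const.add (f.continuous.pow 2)).inv₀ fun x => (hpos x).ne'⟩ (c := 1) fun x => ?_
  change |(1 + f x ^ 2)⁻¹| ≤ 1
  rw [abs_of_pos (inv_pos.mpr (hpos x))]
  exact inv_le_one_of_one_le₀ (by nlinarith [sq_nonneg (f x)])

lemma denseRange_stoneCechUnit_insert (p : StoneCech X) :
    DenseRange fun x : X => (⟨stoneCechUnit x, Or.inl ⟨x, rfl⟩⟩ :
      (range (stoneCechUnit : X → StoneCech X) ∪ {p} : Set (StoneCech X))) := by
  refine Subtype.dense_iff.mpr fun q _ => ?_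
  rw [← range_comp]
  exact denseRange_stoneCechUnit q

lemma le_of_forall_stoneCechUnit_mem {U : Set (StoneCech X)} (hU : IsOpen U)
    {K : C(StoneCech X, ℝ)} {c : ℝ} (h : ∀ x, stoneCechUnit x ∈ U → c ≤ K (stoneCechUnit x))
    {p : StoneCech X} (hp : p ∈ U) : c ≤ K p := by
  refine closure_minimal ?_ (isClosed_le continuous_const K.continuous)
    (denseRange_stoneCechUnit.open_subset_closure_inter hU hp)
  rintro _ ⟨hU, x, rfl⟩
  exact h x hU

lemma eq_stoneCechUnit_of_stoneCechExtend_eq [CompletelyRegularSpace X] {Y : Type*}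
    [TopologicalSpace Y] {e : Y → X} (he : IsInducing e) {q : StoneCech Y} {y : Y}
    (h : stoneCechExtend (continuous_stoneCechUnit.comp he.continuous) q =
      stoneCechUnit (e y)) :
    q = stoneCechUnit y := by
  set π := stoneCechExtend (continuous_stoneCechUnit.comp he.continuous)
  have hπ : Continuous π := continuous_stoneCechExtend _
  by_contra hne
  obtain ⟨U, V, hU, hV, hqU, hyV, hUV⟩ := t2_separation hne
  obtain ⟨W, hW, hWV⟩ := (isInducing_stoneCechUnit.comp he).isOpen_iff.mp
    (hV.preimage continuous_stoneCechUnit)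
  have hqW : π q ∈ W := by
    rw [h]
    exact (hWV ▸ hyV : y ∈ (stoneCechUnit ∘ e) ⁻¹' W)
  obtain ⟨z, hzU, hzW⟩ :=
    denseRange_stoneCechUnit.exists_mem_open (hU.inter (hW.preimage hπ)) ⟨q, hqU, hqW⟩
  have hzV : z ∈ stoneCechUnit ⁻¹' V := by
    rw [← hWV]
    simpa [π, stoneCechExtend_stoneCechUnit] using hzW
  exact disjoint_left.mp hUV hzU hzV

end StoneCech

section Hewitt

variable {X : Type*} [TopologicalSpace X]

lemma apply_ne_zero_of_mem_hewittSet {p : StoneCech X} (hp : p ∈ hewittSet X)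
    (B : C(StoneCech X, ℝ)) (hB : ∀ x, B (stoneCechUnit x) ≠ 0) : B p ≠ 0 := by
  obtain ⟨g, hg⟩ := hp ⟨fun x => (B (stoneCechUnit x))⁻¹,
    (B.continuous.comp continuous_stoneCechUnit).inv₀ hB⟩
  have hgB : (fun y => g y * B y) = fun _ => 1 :=
    (g.continuous.mul (B.continuous.comp continuous_subtype_val)).ext_on
      (denseRange_stoneCechUnit_insert p) continuous_const <| by
        rintro _ ⟨x, rfl⟩
        exact (congrArg (· * _) (hg x)).trans (inv_mul_cancel₀ (hB x))
  exact right_ne_zero_of_mul_eq_one (congrFun hgB ⟨p, Or.inr rfl⟩)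

/-- `f` extends to `X ∪ {p}` as the quotient of the extensions of `f (1 + f²)⁻¹` and
`(1 + f²)⁻¹`. -/
lemma mem_hewittSet_of_forall_extension_inv_one_add_sq_ne_zero {p : StoneCech X}
    (h : ∀ (f : C(X, ℝ)) (K : C(StoneCech X, ℝ)),
      (∀ x, K (stoneCechUnit x) = (1 + f x ^ 2)⁻¹) → K p ≠ 0) :
    p ∈ hewittSet X := by
  intro f
  have hpos : ∀ x, 0 < 1 + f x ^ 2 := fun x => by positivity
  obtain ⟨K, hK⟩ := exists_stoneCech_extension_inv_one_add_sq f
  obtain ⟨A, hA⟩ := exists_stoneCech_extension_of_abs_le ⟨fun x => f x * (1 + f x ^ 2)⁻¹,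
    f.continuous.mul ((continuous_const.add (f.continuous.pow 2)).inv₀
      fun x => (hpos x).ne')⟩ (c := 1) fun x => by
    change |f x * (1 + f x ^ 2)⁻¹| ≤ 1
    rw [abs_mul, abs_of_pos (inv_pos.mpr (hpos x))]
    exact mul_inv_le_one_of_le₀ (abs_le_one_add_sq (f x)) (hpos x).le
  have hKne : ∀ y : (range (stoneCechUnit : X → StoneCech X) ∪ {p} : Set (StoneCech X)),
      K y ≠ 0 := by
    rintro ⟨_, ⟨x, rfl⟩ | rfl⟩
    · exact (hK x).trans_ne (inv_pos.mpr (hpos x)).ne'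
    · exact h f K hK
  refine ⟨⟨fun y => A y / K y,
    (A.continuous.comp continuous_subtype_val).div (K.continuous.comp continuous_subtype_val)
      hKne⟩, fun x => ?_⟩
  change A (stoneCechUnit x) / K (stoneCechUnit x) = f x
  rw [hA, hK]
  exact mul_div_cancel_right₀ _ (inv_pos.mpr (hpos x)).ne'

lemma stoneCechExtend_mem_hewittSet {Y : Type*} [TopologicalSpace Y] {e : Y → X}
    (he : Continuous e) {q : StoneCech Y} (hq : q ∈ hewittSet Y) :
    stoneCechExtend (continuous_stoneCechUnit.comp he) q ∈ hewittSet X :=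
  mem_hewittSet_of_forall_extension_inv_one_add_sq_ne_zero fun f K hK =>
    apply_ne_zero_of_mem_hewittSet hq (K.comp ⟨_, continuous_stoneCechExtend _⟩) fun y => by
      simp only [ContinuousMap.comp_apply, ContinuousMap.coe_mk, stoneCechExtend_stoneCechUnit,
        Function.comp_apply, hK]
      positivity

lemma isRealcompact_setOf_ne_zero [CompletelyRegularSpace X] (B : C(StoneCech X, ℝ))
    (hB : ∀ p ∈ hewittSet X, B p ≠ 0 → p ∈ range stoneCechUnit) :
    IsRealcompact {x : X | B (stoneCechUnit x) ≠ 0} := by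
  intro q hq
  have hval : Continuous (Subtype.val : {x : X | B (stoneCechUnit x) ≠ 0} → X) :=
    continuous_subtype_val
  have hBq : B (stoneCechExtend (continuous_stoneCechUnit.comp hval) q) ≠ 0 :=
    apply_ne_zero_of_mem_hewittSet hq (B.comp ⟨_, continuous_stoneCechExtend _⟩) fun y => by
      simpa only [ContinuousMap.comp_apply, ContinuousMap.coe_mk, stoneCechExtend_stoneCechUnit,
        Function.comp_apply] using y.2.out
  obtain ⟨x, hx⟩ := hB _ (stoneCechExtend_mem_hewittSet hval hq) hBq
  have hxP : B (stoneCechUnit x) ≠ 0 := hx ▸ hBq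
  exact ⟨⟨x, hxP⟩, (eq_stoneCechUnit_of_stoneCechExtend_eq IsInducing.subtypeVal hx.symm).symm⟩

lemma IsHard.mem_image_of_mem_closure {H : Set X} (hH : IsHard H) {p : StoneCech X}
    (hp : p ∈ hardCore X) (hpH : p ∈ closure (stoneCechUnit '' H)) :
    p ∈ stoneCechUnit '' H := by
  have hsub : stoneCechUnit '' H ⊆ hardCore X := by
    rintro _ ⟨x, -, rfl⟩
    exact Or.inl ⟨x, rfl⟩
  have hpH' : (⟨p, hp⟩ : hardCore X) ∈ closure (Subtype.val ⁻¹' (stoneCechUnit '' H)) := by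
    rwa [closure_subtype, Subtype.image_preimage_coe, inter_eq_right.mpr hsub]
  exact (hH.closure_eq ▸ hpH' :)

end Hewitt

lemma exists_mem_closure_image_nonpos {X : Type*} [TopologicalSpace X] {H : Set X}
    {f : C(X, ℝ)} (hf : ¬∃ M, ∀ x ∈ H, |f x| ≤ M) {K : C(StoneCech X, ℝ)}
    (hK : ∀ x, K (stoneCechUnit x) = (1 + f x ^ 2)⁻¹) :
    ∃ p ∈ closure (stoneCechUnit '' H), K p ≤ 0 := by
  by_contra! hKpos
  obtain ⟨ε, hε, hεK⟩ :=
    isClosed_closure.isCompact.exists_forall_le' K.continuous.continuousOn hKpos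
  refine hf ⟨ε⁻¹, fun x hx => ?_⟩
  have hεx : ε ≤ (1 + f x ^ 2)⁻¹ := hK x ▸ hεK _ (subset_closure ⟨x, hx, rfl⟩)
  rw [le_inv_comm₀ hε (by positivity)] at hεx
  exact (abs_le_one_add_sq (f x)).trans hεx

/-- a continuous function bounded on every realcompact cozero set
is bounded on every hard subset of `X`. -/
theorem hardBounded_of_bounded_on_realcompact_cozero (X : Type*) [TopologicalSpace X]
    [T35Space X] (f : C(X, ℝ))
    (hf : ∀ P : Set X, (∃ g : C(X, ℝ), P = {x | g x ≠ 0}) → IsRealcompact P →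
      ∃ M, ∀ x ∈ P, |f x| ≤ M) :
    HardBounded f := by
  intro H hH
  by_contra hunb
  obtain ⟨K, hK⟩ := exists_stoneCech_extension_inv_one_add_sq f
  obtain ⟨p, hpH, hKp⟩ := exists_mem_closure_image_nonpos hunb hK
  have hpX : p ∉ stoneCechUnit '' H := by
    rintro ⟨x, -, rfl⟩
    rw [hK] at hKp
    linarith [inv_pos.mpr (show 0 < 1 + f x ^ 2 by positivity)]
  obtain ⟨G, hG0, hG1, -⟩ := exists_continuous_zero_one_of_isClosed isClosed_closure
    isClosed_singleton (disjoint_singleton_right.mpr fun hp =>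
      hpX (hH.mem_image_of_mem_closure (Or.inr hp) hpH))
  let g : C(X, ℝ) := G.comp ⟨stoneCechUnit, continuous_stoneCechUnit⟩
  obtain ⟨M, hM⟩ := hf {x | g x ≠ 0} ⟨g, rfl⟩ <| isRealcompact_setOf_ne_zero G
    fun q hq hGq => by_contra fun hqX => hGq (hG0 (subset_closure ⟨hq, hqX⟩))
  have hKM : (1 + M ^ 2)⁻¹ ≤ K p := by
    refine le_of_forall_stoneCechUnit_mem (isOpen_ne_fun G.continuous continuous_const)
      (fun x hx => ?_) (show G p ≠ 0 by simp [hG1 (mem_singleton p)])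
    have hfx := hM x hx
    rw [hK]
    exact inv_anti₀ (by positivity) (by nlinarith [sq_abs (f x), abs_nonneg (f x)])
  linarith [inv_pos.mpr (show 0 < 1 + M ^ 2 by positivity)]
end

section
/- Let Y be a subset of a Tychonoff space X such that Y is a finite union of hard subsets of X and Y is C*-embedded in X. Then for every g ∈ C(X) bounded away from zero on every hard subset of Y, the set Y and the zero set Z(g) are completely separated; hence Y is S-embedded in X. -/
open Set ContinuousMap

/-!
A `C*`-embedded finite union `Y` of hard sets is realcompact. Indeed, the extension
`φ : βY → βX` of the inclusion maps `υY` into `υX`, hence into the hard core of `X`. A point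
`p ∈ υY` lies in the closure of `Y`, so `φ p` lies in the closure of some hard `Hᵢ`, and
hardness forces `φ p ∈ Hᵢ ⊆ Y`. As `Y` is `C*`-embedded, `φ` is injective, whence `p ∈ Y`.
In a realcompact space the whole space is hard: a function bounded away from zero on every
hard subset of `Y` is bounded away from zero on `Y`, and a function bounded on every hard
subset of `Y` is bounded, so extends by `C*`-embedding.
-/

open OnePoint

section StoneCech

variable {X Y : Type*} [TopologicalSpace X] [TopologicalSpace Y]

lemma IsHard.closure_image_inter_hardCore_subset {A : Set Y} (hA : IsHard A) :
    closure (stoneCechUnit '' A) ∩ hardCore Y ⊆ stoneCechUnit '' A := by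
  rintro q ⟨hqA, hqY⟩
  have hA_sub : stoneCechUnit '' A ⊆ hardCore Y := by
    rintro _ ⟨a, -, rfl⟩
    exact Or.inl ⟨a, rfl⟩
  have hq : (⟨q, hqY⟩ : hardCore Y) ∈
      closure {p : hardCore Y | (p : StoneCech Y) ∈ stoneCechUnit '' A} := by
    rwa [closure_subtype, show ((↑) : hardCore Y → StoneCech Y) ''
      {p | (p : StoneCech Y) ∈ stoneCechUnit '' A} = stoneCechUnit '' A from
      (Subtype.image_preimage_coe _ _).trans (inter_eq_right.mpr hA_sub)]
  exact hA.closure_subset hq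

lemma hewittSet_subset_hardCore : hewittSet Y ⊆ hardCore Y := by
  intro p hp
  by_cases hpY : p ∈ range (stoneCechUnit : Y → StoneCech Y)
  · exact Or.inl hpY
  · exact Or.inr (subset_closure ⟨hp, hpY⟩)

noncomputable def stoneCechMap {f : X → Y} (hf : Continuous f) : StoneCech X → StoneCech Y :=
  stoneCechExtend (continuous_stoneCechUnit.comp hf)

variable {f : X → Y} (hf : Continuous f)

lemma continuous_stoneCechMap : Continuous (stoneCechMap hf) :=
  continuous_stoneCechExtend _

@[simp]
lemma stoneCechMap_stoneCechUnit (x : X) :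
    stoneCechMap hf (stoneCechUnit x) = stoneCechUnit (f x) :=
  stoneCechExtend_stoneCechUnit _ x

lemma stoneCechExtend_comp_stoneCechMap {K : Type*} [TopologicalSpace K] [T2Space K]
    [CompactSpace K] {u : Y → K} (hu : Continuous u) :
    stoneCechExtend hu ∘ stoneCechMap hf = stoneCechExtend (hu.comp hf) :=
  stoneCech_hom_ext ((continuous_stoneCechExtend hu).comp (continuous_stoneCechMap hf))
    (continuous_stoneCechExtend _) (by ext x; simp)

-- `ℝ ∪ {∞}` is a compact target for every `u : C(Y, ℝ)`; `u` extends over `p` exactly when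
-- its Stone–Čech extension is finite at `p`.
lemma mem_hewittSet_iff_s8 {p : StoneCech Y} :
    p ∈ hewittSet Y ↔ ∀ u : C(Y, ℝ), stoneCechExtend (continuous_coe.comp u.continuous) p ≠ ∞ := by
  set S : Set (StoneCech Y) := range stoneCechUnit ∪ {p}
  constructor
  · intro hp u
    obtain ⟨g, hg⟩ := hp u
    have hdense : Dense (((↑) : S → StoneCech Y) ⁻¹' range stoneCechUnit) := fun w =>
      closure_subtype.mpr <| by
        rw [Subtype.image_preimage_coe, inter_eq_right.mpr subset_union_left]
        exact denseRange_stoneCechUnit _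
    have hext : (fun w : S => ((g w : ℝ) : OnePoint ℝ)) =
        fun w : S => stoneCechExtend (continuous_coe.comp u.continuous) (w : StoneCech Y) :=
      (continuous_coe.comp g.continuous).ext_on hdense
        ((continuous_stoneCechExtend _).comp continuous_subtype_val) <| by
          rintro ⟨_, _⟩ ⟨y, rfl⟩
          simp [hg y]
    rw [← congrFun hext ⟨p, Or.inr rfl⟩]
    exact coe_ne_infty _
  · intro hp u
    have hfin : ∀ w : S, ∃ t : ℝ, (t : OnePoint ℝ) =
        stoneCechExtend (continuous_coe.comp u.continuous) w := by
      rintro ⟨w, ⟨y, rfl⟩ | rfl⟩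
      · exact ⟨u y, by simp⟩
      · exact ne_infty_iff_exists.mp (hp u)
    choose g hg using hfin
    have hg_cont : Continuous g := isOpenEmbedding_coe.isEmbedding.continuous_iff.mpr <| by
      simpa only [Function.comp_def, hg] using
        (continuous_stoneCechExtend _).comp continuous_subtype_val
    refine ⟨⟨g, hg_cont⟩, fun y => coe_injective ?_⟩
    simp [hg]

lemma stoneCechMap_mem_hewittSet {p : StoneCech X} (hp : p ∈ hewittSet X) :
    stoneCechMap hf p ∈ hewittSet Y := by
  rw [mem_hewittSet_iff_s8] at hp ⊢
  intro u
  rw [← Function.comp_apply (f := stoneCechExtend _), stoneCechExtend_comp_stoneCechMap]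
  exact hp (u.comp ⟨f, hf⟩)

end StoneCech

section CStarEmbedded

variable {X : Type*} [TopologicalSpace X] {T : Set X}

lemma CStarEmbedded.exists_comp_stoneCechMap_eq (hC : CStarEmbedded T)
    {F : StoneCech T → Icc (0 : ℝ) 1} (hF : Continuous F) :
    ∃ G : StoneCech X → Icc (0 : ℝ) 1, Continuous G ∧
      G ∘ stoneCechMap continuous_subtype_val = F := by
  let F₀ : C(T, ℝ) := ⟨fun y => F (stoneCechUnit y),
    continuous_subtype_val.comp (hF.comp continuous_stoneCechUnit)⟩
  have hF₀ : ∀ y, |F₀ y| ≤ 1 := fun y => by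
    obtain ⟨h0, h1⟩ := (F (stoneCechUnit y)).2
    exact abs_le.mpr ⟨by simp only [F₀, coe_mk]; linarith, h1⟩
  obtain ⟨g, hg⟩ := hC F₀ ⟨1, hF₀⟩
  have hG : Continuous fun x => projIcc (0 : ℝ) 1 zero_le_one (g x) :=
    continuous_projIcc.comp g.continuous
  refine ⟨stoneCechExtend hG, continuous_stoneCechExtend hG, ?_⟩
  rw [stoneCechExtend_comp_stoneCechMap]
  refine stoneCech_hom_ext (continuous_stoneCechExtend _) hF (funext fun y => ?_)
  simp [hg y, F₀]

lemma CStarEmbedded.stoneCechMap_injective (hC : CStarEmbedded T) :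
    Function.Injective (stoneCechMap (continuous_subtype_val : Continuous ((↑) : T → X))) := by
  intro a b hab
  by_contra hne
  obtain ⟨F, hFa, hFb, hF01⟩ := exists_continuous_zero_one_of_isClosed
    (isClosed_singleton (x := a)) (isClosed_singleton (x := b))
    (disjoint_singleton.mpr hne)
  obtain ⟨G, -, hG⟩ := hC.exists_comp_stoneCechMap_eq
    (F := fun z => ⟨F z, hF01 z⟩) (F.continuous.subtype_mk _)
  have hGab := congrArg G hab
  rw [← Function.comp_apply (f := G), hG, ← Function.comp_apply (f := G), hG] at hGab
  simpa [hFa rfl, hFb rfl] using congrArg Subtype.val hGab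

end CStarEmbedded

section Realcompact

variable {X : Type*} [TopologicalSpace X]

theorem isRealcompact_of_eq_iUnion_isHard {ι : Type*} [Finite ι] {Y : Set X}
    {H : ι → Set X} (hH : ∀ i, IsHard (H i)) (hY : Y = ⋃ i, H i) (hC : CStarEmbedded Y) :
    IsRealcompact Y := by
  intro p hp
  have hφ : Continuous ((↑) : Y → X) := continuous_subtype_val
  have hcore : stoneCechMap hφ p ∈ hardCore X :=
    hewittSet_subset_hardCore (stoneCechMap_mem_hewittSet hφ hp)
  have hcl : stoneCechMap hφ p ∈ ⋃ i, closure (stoneCechUnit '' H i) := by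
    rw [← closure_iUnion_of_finite, ← image_iUnion, ← hY]
    have himage : stoneCechMap hφ '' range stoneCechUnit ⊆ stoneCechUnit '' Y := by
      rintro _ ⟨_, ⟨y, rfl⟩, rfl⟩
      exact ⟨y, y.2, (stoneCechMap_stoneCechUnit hφ y).symm⟩
    exact closure_mono himage <| image_closure_subset_closure_image
      (continuous_stoneCechMap hφ) ⟨p, denseRange_stoneCechUnit p, rfl⟩
  obtain ⟨i, hi⟩ := mem_iUnion.mp hcl
  obtain ⟨x, hx, hxp⟩ := (hH i).closure_image_inter_hardCore_subset ⟨hi, hcore⟩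
  have hxY : x ∈ Y := hY ▸ mem_iUnion_of_mem i hx
  exact ⟨⟨x, hxY⟩, hC.stoneCechMap_injective (by rw [stoneCechMap_stoneCechUnit]; exact hxp)⟩

lemma IsRealcompact.isHard_univ {Y : Type*} [TopologicalSpace Y] (hY : IsRealcompact Y) :
    IsHard (univ : Set Y) := by
  have hcore : hardCore Y = range stoneCechUnit := by
    rw [hardCore, sdiff_eq_empty.mpr hY, closure_empty, union_empty]
  rw [IsHard, image_univ]
  convert isClosed_univ
  exact eq_univ_of_forall fun p => hcore ▸ p.2

lemma completelySeparatedIn_of_le_abs {A : Set X} {g : C(X, ℝ)} {c : ℝ} (hc : 0 < c)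
    (hg : ∀ x ∈ A, c ≤ |g x|) : CompletelySeparatedIn X A {x | g x = 0} := by
  refine ⟨⟨fun x => min (|g x| / c) 1, by fun_prop⟩, fun x hx => ?_, fun x hx => ?_,
    fun x => ⟨le_min (by positivity) zero_le_one, min_le_right _ _⟩⟩
  · exact min_eq_right ((one_le_div hc).mpr (hg x hx))
  · simp [show g x = 0 from hx]

lemma CStarEmbedded.sEmbedded {T : Set X} (hC : CStarEmbedded T) (hT : IsHard (univ : Set T)) :
    SEmbedded T := fun f hf =>
  let ⟨M, hM⟩ := hf univ hT
  hC f ⟨M, fun x => hM x trivial⟩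

end Realcompact

theorem sEmbedded_of_finite_union_of_hard_general (X : Type*) [TopologicalSpace X]
    (Y : Set X) (m : ℕ) (H : Fin m → Set X) (hH : ∀ i, IsHard (H i))
    (hY : Y = ⋃ i, H i) (hC : CStarEmbedded Y) :
    (∀ g : C(X, ℝ), BddAwayOnHards g Y → CompletelySeparatedIn X Y {x | g x = 0}) ∧
      SEmbedded Y := by
  have hYhard : IsHard (univ : Set Y) := (isRealcompact_of_eq_iUnion_isHard hH hY hC).isHard_univ
  refine ⟨fun g hg => ?_, hC.sEmbedded hYhard⟩
  obtain ⟨c, hc, hgc⟩ := hg univ hYhard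
  exact completelySeparatedIn_of_le_abs hc fun x hx => hgc ⟨x, hx⟩ trivial

/-- a `C*`-embedded finite union of hard sets is completely separated
from `Z(g)` for each `g` bounded away from zero on every hard subset of it; hence
it is `S`-embedded. -/
theorem sEmbedded_of_finite_union_of_hard (X : Type*) [TopologicalSpace X] [T35Space X]
    (Y : Set X) (m : ℕ) (H : Fin m → Set X) (hH : ∀ i, IsHard (H i))
    (hY : Y = ⋃ i, H i) (hC : CStarEmbedded Y) :
    (∀ g : C(X, ℝ), BddAwayOnHards g Y → CompletelySeparatedIn X Y {x | g x = 0}) ∧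
      SEmbedded Y :=
  sEmbedded_of_finite_union_of_hard_general X Y m H hH hY hC
end

section
/- Let T be a nearly pseudocompact subset of a Tychonoff space X and f ∈ C(X). Then f is bounded away from zero on every hard subset of T if and only if Z(f) ∩ T = ∅. -/
open Set ContinuousMap

theorem IsCompact.isHard {Y : Type*} [TopologicalSpace Y] {H : Set Y} (hH : IsCompact H) :
    IsHard H :=
  (hH.image continuous_stoneCechUnit).isClosed.preimage continuous_subtype_val

theorem bddAway_iff_zero_set_disjoint_of_nearlyPseudocompact_general (X : Type*)
    [TopologicalSpace X] (T : Set X)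
    (hnp : ∀ H : Set T, IsHard H → IsCompact H) (f : C(X, ℝ)) :
    BddAwayOnHards f T ↔ {x | f x = 0} ∩ T = ∅ := by
  refine ⟨fun hbdd => eq_empty_iff_forall_notMem.2 fun x ⟨hfx, hxT⟩ => ?_, fun hzero H hH => ?_⟩
  · obtain ⟨m, hm, hle⟩ := hbdd {⟨x, hxT⟩} isCompact_singleton.isHard
    have hm_le_zero : m ≤ 0 := by simpa [show f x = 0 from hfx] using hle ⟨x, hxT⟩ rfl
    exact hm.not_ge hm_le_zero
  · have hf_ne_zero (y : T) : f y ≠ 0 := fun hfy => hzero.subset ⟨hfy, y.2⟩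
    exact (hnp H hH).exists_forall_le' (f.continuous.comp continuous_subtype_val).abs.continuousOn
      fun y _ => abs_pos.2 (hf_ne_zero y)

/-- for a nearly pseudocompact subset `T` (every hard subset of `T` is
compact), `f` is bounded away from zero on every hard subset of `T` iff `Z(f) ∩ T = ∅`. -/
theorem bddAway_iff_zero_set_disjoint_of_nearlyPseudocompact (X : Type*)
    [TopologicalSpace X] [T35Space X] (T : Set X)
    (hnp : ∀ H : Set T, IsHard H → IsCompact H) (f : C(X, ℝ)) :
    BddAwayOnHards f T ↔ {x | f x = 0} ∩ T = ∅ :=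
  bddAway_iff_zero_set_disjoint_of_nearlyPseudocompact_general X T hnp f
end
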